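/- arXiv:1904.06908 — 2 statements merged into one kernel-verified Lean document; each statement's English description precedes it below -/
import Mathlib

section
/- There exists a universal constant C₀ ≥ 1 such that: for any Blaschke sequence Λ in the unit disc, any positive harmonic function H on 𝔻, and any z ∈ 𝔻 with e^{H(z)} ≥ max(C₀, #{λ ∈ Λ : ρ(λ,z) ≤ 1/2}), there exists z̃ ∈ 𝔻 with ρ(z̃, Λ) ≥ e^{−H(z̃)} and ρ(z̃, z) ≤ e^{−H(z)/C₀}. -/
/-!
Move `z` to the origin by the disc automorphism `mobius z`, which preserves `pd`. Since
`H z ≥ 140`, Harnack's inequality gives `H ≥ (3/5) H z` on the image of the disc `‖ω‖ ≤ 1/4`,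
so it suffices to find such an `ω` with `pd ω μ ≥ ε := exp (-(3/5) H z)` for every point `μ` of
the moved sequence. Points with `‖μ‖ > 1/2` are at distance `≥ 1/8 ≥ ε` from that disc. The other
ones are finitely many (Blaschke condition), at most `exp (H z)`, while a square grid of mesh
`4 ε` and radius `≈ exp (-(H z) / 10)` has more than `exp (H z)` points. A point `μ` blocks at
most one grid point, because `pd ω μ < ε` forces `‖ω - μ‖ < 2 ε`; so some grid point is free.
-/

open Complex

/-- Pseudohyperbolic distance on the unit disc. -/
noncomputable def pd (a z : ℂ) : ℝ :=
  ‖a - z‖ / ‖1 - (starRingEnd ℂ) a * z‖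

/-- A positive harmonic function on the unit disc, characterized (the disc being
simply connected) as a positive function that is the real part of a holomorphic
function on the disc. -/
def IsPosHarmonicDisc (H : ℂ → ℝ) : Prop :=
  (∃ F : ℂ → ℂ, DifferentiableOn ℂ F (Metric.ball (0:ℂ) 1) ∧
      ∀ z ∈ Metric.ball (0:ℂ) 1, H z = (F z).re) ∧
    ∀ z ∈ Metric.ball (0:ℂ) 1, 0 < H z

open Metric ComplexConjugate

section PseudohyperbolicDistance

variable {a b : ℂ}

theorem sq_norm_one_sub_conj_mul_sub_sq_norm_sub (a b : ℂ) :
    ‖1 - conj a * b‖ ^ 2 - ‖a - b‖ ^ 2 = (1 - ‖a‖ ^ 2) * (1 - ‖b‖ ^ 2) := by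
  simp only [← normSq_eq_norm_sq, normSq_apply, sub_re, sub_im, mul_re, mul_im, one_re,
    one_im, conj_re, conj_im]
  ring

theorem one_sub_conj_mul_ne_zero (ha : ‖a‖ < 1) (hb : ‖b‖ ≤ 1) : 1 - conj a * b ≠ 0 := by
  rw [sub_ne_zero]
  intro h
  have : ‖conj a * b‖ < 1 := by
    rw [norm_mul, norm_conj]
    exact mul_lt_one_of_nonneg_of_lt_one_left (norm_nonneg a) ha hb
  simp [← h] at this

theorem norm_one_sub_conj_mul_le_two (ha : ‖a‖ ≤ 1) (hb : ‖b‖ ≤ 1) :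
    ‖1 - conj a * b‖ ≤ 2 := by
  refine (norm_sub_le _ _).trans ?_
  rw [norm_one, norm_mul, norm_conj]
  nlinarith [norm_nonneg a, norm_nonneg b]

theorem one_sub_norm_le_norm_one_sub_conj_mul (ha : ‖a‖ ≤ 1) :
    1 - ‖b‖ ≤ ‖1 - conj a * b‖ := by
  have := norm_sub_norm_le (1 : ℂ) (conj a * b)
  rw [norm_one, norm_mul, norm_conj] at this
  nlinarith [norm_nonneg b]

theorem norm_one_sub_conj_mul_comm (a b : ℂ) : ‖1 - conj a * b‖ = ‖1 - conj b * a‖ := by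
  rw [← norm_conj]
  simp [mul_comm]

theorem pd_nonneg (a b : ℂ) : 0 ≤ pd a b := by
  unfold pd; positivity

theorem one_sub_pd_sq (ha : ‖a‖ < 1) (hb : ‖b‖ < 1) :
    1 - pd a b ^ 2 = (1 - ‖a‖ ^ 2) * (1 - ‖b‖ ^ 2) / ‖1 - conj a * b‖ ^ 2 := by
  have hD : ‖1 - conj a * b‖ ≠ 0 := norm_ne_zero_iff.2 (one_sub_conj_mul_ne_zero ha hb.le)
  rw [pd, div_pow, ← sq_norm_one_sub_conj_mul_sub_sq_norm_sub, sub_div,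
    div_self (pow_ne_zero 2 hD)]

theorem pd_lt_one (ha : ‖a‖ < 1) (hb : ‖b‖ < 1) : pd a b < 1 := by
  have : 0 < 1 - pd a b ^ 2 := by
    rw [one_sub_pd_sq ha hb]
    have := one_sub_conj_mul_ne_zero ha hb.le
    have : 0 < 1 - ‖a‖ ^ 2 := by nlinarith [norm_nonneg a]
    have : 0 < 1 - ‖b‖ ^ 2 := by nlinarith [norm_nonneg b]
    positivity
  nlinarith [pd_nonneg a b]

theorem mul_one_sub_norm_le_of_pd_le {r : ℝ} (ha : ‖a‖ < 1) (hb : ‖b‖ < 1) (h : pd a b ≤ r) :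
    (1 - r ^ 2) * (1 - ‖b‖) / 4 ≤ 1 - ‖a‖ := by
  rcases lt_or_ge 1 r with hr | hr
  · have : (1 - r ^ 2) * (1 - ‖b‖) ≤ 0 :=
      mul_nonpos_of_nonpos_of_nonneg (by nlinarith) (by linarith)
    linarith
  have hr0 : 0 ≤ 1 - r ^ 2 := by nlinarith [(pd_nonneg a b).trans h]
  have hD := one_sub_norm_le_norm_one_sub_conj_mul (b := b) ha.le
  have hpd : (1 - r ^ 2) * ‖1 - conj a * b‖ ^ 2 ≤ (1 - ‖a‖ ^ 2) * (1 - ‖b‖ ^ 2) := by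
    have hD0 := norm_ne_zero_iff.2 (one_sub_conj_mul_ne_zero ha hb.le)
    rw [← div_mul_cancel₀ ((1 - ‖a‖ ^ 2) * (1 - ‖b‖ ^ 2)) (pow_ne_zero 2 hD0),
      ← one_sub_pd_sq ha hb]
    exact mul_le_mul_of_nonneg_right (by nlinarith [pd_nonneg a b]) (sq_nonneg _)
  have : (1 - r ^ 2) * (1 - ‖b‖) ≤ (1 - ‖a‖ ^ 2) * (1 + ‖b‖) := by
    refine le_of_mul_le_mul_right ?_ (by linarith : 0 < 1 - ‖b‖)
    nlinarith [mul_le_mul_of_nonneg_left (pow_le_pow_left₀ (by linarith) hD 2) hr0]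
  have : (1 + ‖a‖) * (1 + ‖b‖) ≤ 4 := by nlinarith [norm_nonneg a, norm_nonneg b]
  nlinarith [mul_le_mul_of_nonneg_left this (by linarith : 0 ≤ 1 - ‖a‖)]

theorem norm_sub_lt_of_pd_lt {ε : ℝ} (ha : ‖a‖ < 1) (hb : ‖b‖ ≤ 1) (h : pd a b < ε) :
    ‖a - b‖ < 2 * ε := by
  have hε : 0 < ε := (pd_nonneg a b).trans_lt h
  rw [pd, div_lt_iff₀ (norm_pos_iff.2 (one_sub_conj_mul_ne_zero ha hb))] at h
  nlinarith [norm_one_sub_conj_mul_le_two ha.le hb]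

theorem norm_sub_norm_div_two_le_pd (ha : ‖a‖ < 1) (hb : ‖b‖ ≤ 1) :
    (‖b‖ - ‖a‖) / 2 ≤ pd a b := by
  have hD := norm_pos_iff.2 (one_sub_conj_mul_ne_zero ha hb)
  rw [pd, le_div_iff₀ hD, norm_sub_rev a b]
  rcases le_or_gt ‖b‖ ‖a‖ with hab | hab
  · nlinarith [norm_nonneg (b - a)]
  · nlinarith [norm_one_sub_conj_mul_le_two ha.le hb, norm_sub_norm_le b a]

end PseudohyperbolicDistance

section Mobius

variable {z a b w : ℂ}

noncomputable def mobius (z w : ℂ) : ℂ := (z - w) / (1 - conj z * w)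

theorem mobius_zero (z : ℂ) : mobius z 0 = z := by simp [mobius]

theorem norm_mobius (z w : ℂ) : ‖mobius z w‖ = pd w z := by
  rw [mobius, norm_div, norm_sub_rev, norm_one_sub_conj_mul_comm, pd]

theorem norm_mobius_lt_one (hz : ‖z‖ < 1) (hw : ‖w‖ < 1) : ‖mobius z w‖ < 1 :=
  norm_mobius z w ▸ pd_lt_one hw hz

theorem mobius_mobius (hz : ‖z‖ < 1) (hw : ‖w‖ < 1) : mobius z (mobius z w) = w := by
  have hD := one_sub_conj_mul_ne_zero hz hw.le
  have hz' := one_sub_conj_mul_ne_zero hz hz.le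
  have hnum : z - (z - w) / (1 - conj z * w) = w * (1 - conj z * z) / (1 - conj z * w) := by
    rw [sub_div' hD]; ring
  have hden : 1 - conj z * ((z - w) / (1 - conj z * w)) = (1 - conj z * z) / (1 - conj z * w) := by
    rw [mul_div_assoc', one_sub_div hD]; ring
  rw [mobius, mobius, hnum, hden, div_div_div_cancel_right₀ hD, mul_div_cancel_right₀ _ hz']

theorem pd_mobius (hz : ‖z‖ < 1) (ha : ‖a‖ < 1) (hb : ‖b‖ < 1) :
    pd (mobius z a) (mobius z b) = pd a b := by
  have hDa := one_sub_conj_mul_ne_zero hz ha.le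
  have hDb := one_sub_conj_mul_ne_zero hz hb.le
  have hsub : mobius z a - mobius z b =
      (1 - conj z * z) * (b - a) / ((1 - conj z * a) * (1 - conj z * b)) := by
    rw [mobius, mobius, div_sub_div _ _ hDa hDb]
    ring
  have hden : 1 - conj (mobius z a) * mobius z b =
      (1 - conj z * z) * (1 - conj a * b) / (conj (1 - conj z * a) * (1 - conj z * b)) := by
    have hDa' : conj (1 - conj z * a) ≠ 0 := (map_ne_zero _).2 hDa
    rw [mobius, mobius, map_div₀, div_mul_div_comm, one_sub_div (mul_ne_zero hDa' hDb)]
    simp only [map_sub, map_mul, map_one, conj_conj]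
    ring
  have hzz := norm_ne_zero_iff.2 (one_sub_conj_mul_ne_zero hz hz.le)
  rw [pd, pd, hsub, hden]
  simp only [norm_div, norm_mul, norm_conj, norm_sub_rev b a]
  field_simp

theorem differentiableOn_mobius (hz : ‖z‖ < 1) : DifferentiableOn ℂ (mobius z) (ball 0 1) :=
  ((differentiableOn_const z).sub differentiableOn_id).div
    ((differentiableOn_const 1).sub ((differentiableOn_const _).mul differentiableOn_id))
    fun _ hw => one_sub_conj_mul_ne_zero hz (mem_ball_zero_iff.1 hw).le

theorem mapsTo_mobius (hz : ‖z‖ < 1) : Set.MapsTo (mobius z) (ball 0 1) (ball 0 1) :=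
  fun _ hw => mem_ball_zero_iff.2 (norm_mobius_lt_one hz (mem_ball_zero_iff.1 hw))

end Mobius

section Harnack

variable {p q : ℂ}

theorem add_conj_ne_zero (hp : 0 < p.re) (hq : 0 < q.re) : p + conj q ≠ 0 :=
  ne_of_apply_ne re (by simp only [add_re, conj_re, zero_re]; linarith)

theorem norm_sub_lt_norm_add_conj (hp : 0 < p.re) (hq : 0 < q.re) : ‖p - q‖ < ‖p + conj q‖ := by
  have h : ‖p + conj q‖ ^ 2 - ‖p - q‖ ^ 2 = 4 * p.re * q.re := by
    simp only [← normSq_eq_norm_sq, normSq_apply, sub_re, sub_im, add_re, add_im, conj_re,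
      conj_im]
    ring
  exact lt_of_pow_lt_pow_left₀ 2 (norm_nonneg _) (by nlinarith [mul_pos hp hq])

theorem re_mul_one_sub_le_of_norm_sub_le {r : ℝ} (hp : 0 ≤ p.re) (hq : 0 ≤ q.re) (hr0 : 0 ≤ r)
    (hr : r ≤ 1) (h : ‖p - q‖ ≤ r * ‖p + conj q‖) : q.re * (1 - r) ≤ p.re * (1 + r) := by
  have hsq := pow_le_pow_left₀ (norm_nonneg _) h 2
  simp only [mul_pow, ← normSq_eq_norm_sq, normSq_apply, sub_re, sub_im, add_re, add_im,
    conj_re, conj_im] at hsq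
  have : (q.re - p.re) ^ 2 ≤ (r * (p.re + q.re)) ^ 2 := by
    nlinarith [mul_nonneg (by nlinarith : 0 ≤ 1 - r ^ 2) (sq_nonneg (p.im - q.im))]
  nlinarith [abs_le_of_sq_le_sq' this (by positivity)]

/-- Harnack's inequality at `0`: the Cayley transform `(G - G 0) / (G + conj (G 0))` maps the disc
into itself and vanishes at `0`, so the Schwarz lemma bounds it by `‖w‖`. -/
theorem re_zero_mul_one_sub_norm_le {G : ℂ → ℂ} (hG : DifferentiableOn ℂ G (ball 0 1))
    (hpos : ∀ w ∈ ball 0 1, 0 < (G w).re) {w : ℂ} (hw : w ∈ ball 0 1) :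
    (G 0).re * (1 - ‖w‖) ≤ (G w).re * (1 + ‖w‖) := by
  have h0 := hpos 0 (mem_ball_self one_pos)
  have hden : ∀ ξ ∈ ball (0 : ℂ) 1, G ξ + conj (G 0) ≠ 0 := fun ξ hξ =>
    add_conj_ne_zero (hpos ξ hξ) h0
  have hmaps : Set.MapsTo (fun ξ => (G ξ - G 0) / (G ξ + conj (G 0))) (ball 0 1)
      (closedBall 0 1) := fun ξ hξ => by
    rw [mem_closedBall_zero_iff, norm_div, div_le_one (norm_pos_iff.2 (hden ξ hξ))]
    exact (norm_sub_lt_norm_add_conj (hpos ξ hξ) h0).le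
  have hschwarz := Complex.norm_le_norm_of_mapsTo_ball
    ((hG.sub_const _).div (hG.add_const _) hden) hmaps (by simp) (mem_ball_zero_iff.1 hw)
  rw [Pi.div_apply, norm_div, div_le_iff₀ (norm_pos_iff.2 (hden w hw))] at hschwarz
  exact re_mul_one_sub_le_of_norm_sub_le (hpos w hw).le h0.le (norm_nonneg w)
    (mem_ball_zero_iff.1 hw).le hschwarz

theorem IsPosHarmonicDisc.mul_one_sub_norm_le {H : ℂ → ℝ} (hH : IsPosHarmonicDisc H) {z w : ℂ}
    (hz : z ∈ ball 0 1) (hw : w ∈ ball 0 1) :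
    H z * (1 - ‖w‖) ≤ H (mobius z w) * (1 + ‖w‖) := by
  obtain ⟨⟨F, hF, hFH⟩, hpos⟩ := hH
  have hz1 := mem_ball_zero_iff.1 hz
  have hmaps := mapsTo_mobius hz1
  have := re_zero_mul_one_sub_norm_le (hF.comp (differentiableOn_mobius hz1) hmaps)
    (fun ξ hξ => hFH _ (hmaps hξ) ▸ hpos _ (hmaps hξ)) hw
  simpa only [Function.comp_apply, mobius_zero, ← hFH z hz, ← hFH _ (hmaps hw)] using this

end Harnack

theorem one_le_norm_natCast_add_natCast_mul_I_sub {p q : ℕ × ℕ} (h : p ≠ q) :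
    1 ≤ ‖((p.1 : ℂ) + p.2 * I) - (q.1 + q.2 * I)‖ := by
  have key : ∀ a b : ℕ, a ≠ b → (1 : ℝ) ≤ |(a : ℝ) - b| := fun a b hab => by
    have := Int.one_le_abs (sub_ne_zero.2 (Nat.cast_injective.ne hab : (a : ℤ) ≠ b))
    exact_mod_cast this
  by_cases h1 : p.1 = q.1
  · have h2 : p.2 ≠ q.2 := fun h2 => h (Prod.ext h1 h2)
    refine (key _ _ h2).trans (le_of_eq_of_le ?_ (abs_im_le_norm _))
    simp
  · refine (key _ _ h1).trans (le_of_eq_of_le ?_ (abs_re_le_norm _))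
    simp

theorem exists_finset_card_eq_sq_pairwise_le_norm_sub {δ : ℝ} (hδ : 0 < δ) (m : ℕ) :
    ∃ s : Finset ℂ, s.card = (m + 1) ^ 2 ∧ (∀ w ∈ s, ‖w‖ ≤ 2 * m * δ) ∧
      (s : Set ℂ).Pairwise fun a b => δ ≤ ‖a - b‖ := by
  set g : ℕ × ℕ → ℂ := fun p => δ * (p.1 + p.2 * I)
  have hsep : ∀ p q, p ≠ q → δ ≤ ‖g p - g q‖ := fun p q hpq => by
    rw [← mul_sub, norm_mul, norm_real, Real.norm_of_nonneg hδ.le]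
    exact le_mul_of_one_le_right hδ.le (one_le_norm_natCast_add_natCast_mul_I_sub hpq)
  set grid := Finset.range (m + 1) ×ˢ Finset.range (m + 1)
  refine ⟨grid.image g, ?_, ?_, ?_⟩
  · rw [Finset.card_image_of_injective _ fun p q hpq => by_contra fun hne => ?_]
    · simp [grid, sq]
    · have := hsep p q hne
      rw [hpq, sub_self, norm_zero] at this
      linarith
  · simp only [Finset.mem_image, Finset.mem_product, Finset.mem_range, grid]
    rintro _ ⟨p, ⟨hp1, hp2⟩, rfl⟩
    have hp1 : (p.1 : ℝ) ≤ m := by exact_mod_cast Nat.lt_succ_iff.1 hp1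
    have hp2 : (p.2 : ℝ) ≤ m := by exact_mod_cast Nat.lt_succ_iff.1 hp2
    calc ‖g p‖ ≤ δ * (p.1 + p.2) := by
          simp only [g, norm_mul, norm_real, Real.norm_of_nonneg hδ.le]
          gcongr
          refine (norm_add_le _ _).trans ?_
          simp
      _ ≤ 2 * m * δ := by nlinarith
  · simp only [Finset.coe_image]
    rintro _ ⟨p, -, rfl⟩ _ ⟨q, -, rfl⟩ hne
    exact hsep p q fun hpq => hne (hpq ▸ rfl)

theorem exists_mem_forall_le_pd {κ : Type*} {ε : ℝ} {s : Finset ℂ} (hs : ∀ w ∈ s, ‖w‖ < 1)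
    (hsep : (s : Set ℂ).Pairwise fun a b => 4 * ε ≤ ‖a - b‖) {t : Finset κ} {μ : κ → ℂ}
    (hμ : ∀ k ∈ t, ‖μ k‖ ≤ 1) (hcard : t.card < s.card) :
    ∃ w ∈ s, ∀ k ∈ t, ε ≤ pd w (μ k) := by
  by_contra! h
  have : Nonempty κ := by
    obtain ⟨w, hw⟩ := Finset.card_pos.1 ((Nat.zero_le _).trans_lt hcard)
    exact ⟨(h w hw).choose⟩
  choose! f hft hf using h
  obtain ⟨a, ha, b, hb, hab, hfab⟩ := Finset.exists_ne_map_eq_of_card_lt_of_maps_to hcard hft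
  have hμa := norm_sub_lt_of_pd_lt (hs a ha) (hμ _ (hft a ha)) (hf a ha)
  have hμb := norm_sub_lt_of_pd_lt (hs b hb) (hμ _ (hft b hb)) (hf b hb)
  rw [← hfab, norm_sub_rev] at hμb
  linarith [hsep ha hb hab, norm_sub_le_norm_sub_add_norm_sub a (μ (f a)) b]

theorem exists_norm_le_forall_le_pd {κ : Type*} {ε : ℝ} (hε : 0 < ε) (hε8 : ε ≤ 1 / 8) {m : ℕ}
    (hm : 8 * m * ε ≤ 1 / 4) {μ : κ → ℂ} (hμ : ∀ k, ‖μ k‖ < 1) {t : Finset κ}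
    (ht : ∀ k ∉ t, 1 / 2 < ‖μ k‖) (hcard : t.card < (m + 1) ^ 2) :
    ∃ ω, ‖ω‖ ≤ 8 * m * ε ∧ ∀ k, ε ≤ pd ω (μ k) := by
  obtain ⟨s, hs_card, hs_norm, hs_sep⟩ :=
    exists_finset_card_eq_sq_pairwise_le_norm_sub (by positivity : 0 < 4 * ε) m
  have hs_norm' : ∀ w ∈ s, ‖w‖ ≤ 8 * m * ε := fun w hw => by linarith [hs_norm w hw]
  obtain ⟨ω, hωs, hω⟩ := exists_mem_forall_le_pd (fun w hw => by linarith [hs_norm' w hw]) hs_sep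
    (fun k _ => (hμ k).le) (hs_card ▸ hcard)
  refine ⟨ω, hs_norm' ω hωs, fun k => ?_⟩
  by_cases hk : k ∈ t
  · exact hω k hk
  · have := norm_sub_norm_div_two_le_pd (a := ω) (by linarith [hs_norm' ω hωs]) (hμ k).le
    linarith [ht k hk, hs_norm' ω hωs]

theorem finite_setOf_pd_le {ι : Type*} {Λ : ι → ℂ} (hΛ : ∀ k, ‖Λ k‖ < 1)
    (hlim : Filter.Tendsto (fun k => 1 - ‖Λ k‖) Filter.cofinite (nhds 0)) {z : ℂ} (hz : ‖z‖ < 1)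
    {r : ℝ} (hr₀ : 0 ≤ r) (hr : r < 1) : {k | pd (Λ k) z ≤ r}.Finite := by
  have hδ : 0 < (1 - r ^ 2) * (1 - ‖z‖) / 4 := by
    have : 0 < 1 - r ^ 2 := by nlinarith
    have : 0 < 1 - ‖z‖ := by linarith
    positivity
  exact (Filter.eventually_cofinite.1 (hlim.eventually (gt_mem_nhds hδ))).subset
    fun k hk => not_lt.2 (mul_one_sub_norm_le_of_pd_le (hΛ k) hz hk)

theorem mul_exp_neg_le_exp_neg {c x y : ℝ} (h : c - 1 ≤ x - y) :
    c * Real.exp (-x) ≤ Real.exp (-y) := by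
  calc c * Real.exp (-x) ≤ Real.exp (x - y) * Real.exp (-x) := by
        gcongr
        linarith [Real.add_one_le_exp (x - y)]
    _ = Real.exp (-y) := by rw [← Real.exp_add]; ring_nf

theorem mul_exp_neg_le_one {c x : ℝ} (h : c - 1 ≤ x) : c * Real.exp (-x) ≤ 1 := by
  simpa using mul_exp_neg_le_exp_neg (y := 0) (by linarith)

theorem exp_lt_floor_exp_half_add_one_sq (h : ℝ) :
    Real.exp h < (⌊Real.exp (h / 2)⌋₊ + 1) ^ 2 := by
  calc Real.exp h = Real.exp (h / 2) ^ 2 := by rw [← Real.exp_nat_mul]; ring_nf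
    _ < _ := pow_lt_pow_left₀ (Nat.lt_floor_add_one _) (Real.exp_pos _).le two_ne_zero

theorem IsPosHarmonicDisc.exp_neg_mobius_le {H : ℂ → ℝ} (hH : IsPosHarmonicDisc H) {z ω : ℂ}
    (hz : z ∈ ball 0 1) (hω : ‖ω‖ ≤ 1 / 4) :
    Real.exp (-H (mobius z ω)) ≤ Real.exp (-(3 / 5 * H z)) := by
  have h := hH.mul_one_sub_norm_le hz (mem_ball_zero_iff.2 (by linarith))
  rw [Real.exp_le_exp, neg_le_neg_iff]
  nlinarith [hH.2 z hz, norm_nonneg ω]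

theorem exists_norm_le_forall_exp_neg_le_pd {κ : Type*} {h : ℝ} (hh : 140 ≤ h) {μ : κ → ℂ}
    (hμ : ∀ k, ‖μ k‖ < 1) {t : Finset κ} (ht : ∀ k ∉ t, 1 / 2 < ‖μ k‖)
    (hcard : (t.card : ℝ) ≤ Real.exp h) :
    ∃ ω, ‖ω‖ ≤ Real.exp (-(h / 20)) ∧ ∀ k, Real.exp (-(3 / 5 * h)) ≤ pd ω (μ k) := by
  set ε := Real.exp (-(3 / 5 * h))
  set m := ⌊Real.exp (h / 2)⌋₊
  have hmε : 8 * m * ε ≤ Real.exp (-(h / 20)) := by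
    calc 8 * m * ε ≤ 8 * Real.exp (h / 2) * ε := by
          gcongr; exact Nat.floor_le (Real.exp_pos _).le
      _ = 8 * Real.exp (-(h / 10)) := by
          rw [mul_assoc, ← Real.exp_add]; ring_nf
      _ ≤ _ := mul_exp_neg_le_exp_neg (by linarith)
  have hR : Real.exp (-(h / 20)) ≤ 1 / 4 := by
    linarith [mul_exp_neg_le_one (c := 4) (x := h / 20) (by linarith)]
  have hε8 : ε ≤ 1 / 8 := by
    linarith [mul_exp_neg_le_one (c := 8) (x := 3 / 5 * h) (by linarith)]
  obtain ⟨ω, hωR, hω⟩ := exists_norm_le_forall_le_pd (Real.exp_pos _) hε8 (hmε.trans hR) hμ ht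
    (by exact_mod_cast hcard.trans_lt (exp_lt_floor_exp_half_add_one_sq h))
  exact ⟨ω, hωR.trans hmε, hω⟩

/-- Lemma 3.2 of the paper. -/
theorem stmt_13 :
    ∃ C₀ : ℝ, 1 ≤ C₀ ∧ ∀ (Λ : ℕ → ℂ) (H : ℂ → ℝ),
      (∀ k, Λ k ∈ Metric.ball (0:ℂ) 1) →
      (Summable fun k => 1 - ‖Λ k‖) →
      IsPosHarmonicDisc H →
      ∀ z ∈ Metric.ball (0:ℂ) 1,
        max C₀ ({k | pd (Λ k) z ≤ 1 / 2}.ncard : ℝ) ≤ Real.exp (H z) →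
        ∃ zt ∈ Metric.ball (0:ℂ) 1,
          (∀ k, Real.exp (-H zt) ≤ pd zt (Λ k)) ∧
          pd zt z ≤ Real.exp (-H z / C₀) := by
  refine ⟨Real.exp 140, Real.one_le_exp (by norm_num), ?_⟩
  intro Λ H hΛ hsum hH z hz hmax
  have hΛ1 k : ‖Λ k‖ < 1 := mem_ball_zero_iff.1 (hΛ k)
  have hz1 : ‖z‖ < 1 := mem_ball_zero_iff.1 hz
  have hh : 140 ≤ H z := Real.exp_le_exp.1 ((le_max_left _ _).trans hmax)
  have hT := finite_setOf_pd_le hΛ1 hsum.tendsto_cofinite_zero hz1 (r := 1 / 2) (by norm_num)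
    (by norm_num)
  obtain ⟨ω, hωR, hω⟩ := exists_norm_le_forall_exp_neg_le_pd hh
    (fun k => norm_mobius_lt_one hz1 (hΛ1 k)) (t := hT.toFinset)
    (fun k hk => by simpa [norm_mobius] using hk)
    (Set.ncard_eq_toFinset_card _ hT ▸ (le_max_right _ _).trans hmax)
  have hω4 : ‖ω‖ ≤ 1 / 4 := by
    linarith [mul_exp_neg_le_one (c := 4) (x := H z / 20) (by linarith)]
  have hω1 : ‖ω‖ < 1 := by linarith
  refine ⟨mobius z ω, mem_ball_zero_iff.2 (norm_mobius_lt_one hz1 hω1), fun k => ?_, ?_⟩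
  · rw [← mobius_mobius hz1 (hΛ1 k), pd_mobius hz1 hω1 (norm_mobius_lt_one hz1 (hΛ1 k))]
    exact (hH.exp_neg_mobius_le hz hω4).trans (hω k)
  · rw [← norm_mobius, mobius_mobius hz1 hω1, neg_div]
    refine hωR.trans (Real.exp_le_exp.2 (neg_le_neg ?_))
    exact div_le_div_of_nonneg_left (by linarith) (by norm_num)
      (by linarith [Real.add_one_le_exp 140])
end

section
/- Let H₁, H₂ be positive harmonic functions on the unit disc with limsup_{|z|→1} H₁(z)/H₂(z) = ∞. Then there exists a sequence of points {a_j} in 𝔻 with ρ(a_j,a_k) ≥ 1/2 for j ≠ k, such that H₁(a_j)/H₂(a_j) → ∞, (1−|a_j|)·H₂(a_j) → 0, and there exist positive integers N_j with N_j·(1−|a_j|)·H₂(a_j) → 0, N_j·(1−|a_j|)·H₁(a_j) → ∞, and Σ_j N_j·(1−|a_j|)·H₂(a_j) < ∞. -/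
/-!
By Harnack, `(1 - ‖z‖) H₁ z ≤ C`. Pick the points `a_j` one after the
other, each so much closer to the boundary than the previous one that the radial pseudohyperbolic
distance is already `≥ 1/2`, and with `H₁/H₂ (a_j) > (j + 2C) 2^j`. Writing
`x_i = (1 - ‖a_j‖) H_i (a_j)`, the integer `N_j = ⌈j / x₁⌉ + 1` satisfies `N_j x₁ ≥ j` and
`N_j x₂ ≤ (j + 2 x₁) / (x₁ / x₂) ≤ 2^{-j}`.
-/

open Complex Filter

open Metric

lemma pd_comm (a b : ℂ) : pd a b = pd b a := by
  unfold pd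
  rw [← Complex.norm_conj (1 - (starRingEnd ℂ) a * b), norm_sub_rev a b]
  congr 2
  simp only [map_sub, map_mul, Complex.conj_conj, map_one]
  ring

lemma abs_norm_sub_norm_div_le_pd {a b : ℂ} (ha : ‖a‖ < 1) (hb : ‖b‖ < 1) :
    |‖b‖ - ‖a‖| / (1 - ‖a‖ * ‖b‖) ≤ pd a b := by
  set r := ‖a‖
  set s := ‖b‖
  set t := ((starRingEnd ℂ) a * b).re
  have hr : 0 ≤ r := norm_nonneg a
  have hs : 0 ≤ s := norm_nonneg b
  have hrs : 0 < 1 - r * s := by nlinarith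
  have ht : t ≤ r * s := by
    simpa only [norm_mul, Complex.norm_conj] using Complex.re_le_norm ((starRingEnd ℂ) a * b)
  have hnum : ‖a - b‖ ^ 2 = r ^ 2 + s ^ 2 - 2 * t := by
    simp only [r, s, t, Complex.sq_norm, Complex.normSq_apply, Complex.sub_re, Complex.sub_im,
      Complex.mul_re, Complex.conj_re, Complex.conj_im]
    ring
  have hden : ‖1 - (starRingEnd ℂ) a * b‖ ^ 2 = 1 - 2 * t + r ^ 2 * s ^ 2 := by
    simp only [r, s, t, Complex.sq_norm, Complex.normSq_apply, Complex.sub_re, Complex.sub_im,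
      Complex.mul_re, Complex.mul_im, Complex.conj_re, Complex.conj_im, Complex.one_re,
      Complex.one_im]
    ring
  have hden_pos : 0 < ‖1 - (starRingEnd ℂ) a * b‖ := by
    rw [← sq_lt_sq₀ le_rfl (norm_nonneg _), hden]
    nlinarith
  -- the difference of the squares is `2 (rs - t)(1 - r²)(1 - s²) ≥ 0`
  have hsq : ((s - r) * ‖1 - (starRingEnd ℂ) a * b‖) ^ 2 ≤ (‖a - b‖ * (1 - r * s)) ^ 2 := by
    rw [mul_pow, mul_pow, hnum, hden]
    nlinarith [mul_nonneg (mul_nonneg (sub_nonneg.2 ht) (by nlinarith : (0:ℝ) ≤ 1 - r ^ 2))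
      (by nlinarith : (0:ℝ) ≤ 1 - s ^ 2)]
  have key := abs_le_of_sq_le_sq hsq (by positivity)
  rw [abs_mul, abs_of_pos hden_pos] at key
  rw [pd, div_le_div_iff₀ hrs hden_pos]
  exact key

/-- The point `s ∈ [r, 1)` of the real axis with `pd r s = 1 / 2`. -/
noncomputable def pdHalfRadius (r : ℝ) : ℝ := (2 * r + 1) / (2 + r)

lemma le_pdHalfRadius {r : ℝ} (h0 : 0 ≤ r) (h1 : r ≤ 1) : r ≤ pdHalfRadius r := by
  rw [pdHalfRadius, le_div_iff₀ (by linarith)]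
  nlinarith

lemma pdHalfRadius_lt_one {r : ℝ} (h0 : 0 ≤ r) (h1 : r < 1) : pdHalfRadius r < 1 := by
  rw [pdHalfRadius, div_lt_one (by linarith)]
  linarith

lemma half_le_pd_of_pdHalfRadius_le {a b : ℂ} (ha : ‖a‖ < 1) (hb : ‖b‖ < 1)
    (hab : pdHalfRadius ‖a‖ ≤ ‖b‖) : 1 / 2 ≤ pd a b := by
  have hr := norm_nonneg a
  have hle : ‖a‖ ≤ ‖b‖ := (le_pdHalfRadius hr ha.le).trans hab
  rw [pdHalfRadius, div_le_iff₀ (by linarith)] at hab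
  refine le_trans ?_ (abs_norm_sub_norm_div_le_pd ha hb)
  rw [abs_of_nonneg (sub_nonneg.2 hle), div_le_div_iff₀ two_pos (by nlinarith)]
  linarith

lemma exists_seq_pdHalfRadius_lt_norm {P : ℕ → ℂ → Prop}
    (hP : ∀ j, ∀ r < 1, ∃ z ∈ ball (0:ℂ) 1, r < ‖z‖ ∧ P j z) :
    ∃ a : ℕ → ℂ, (∀ j, a j ∈ ball (0:ℂ) 1) ∧ (∀ j, P j (a j)) ∧
      ∀ j, pdHalfRadius ‖a j‖ < ‖a (j + 1)‖ := by
  have hnext (j : ℕ) (w : ball (0:ℂ) 1) :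
      ∃ z : ball (0:ℂ) 1, pdHalfRadius ‖(w : ℂ)‖ < ‖(z : ℂ)‖ ∧ P j z := by
    obtain ⟨z, hz, hr, hPz⟩ :=
      hP j _ (pdHalfRadius_lt_one (norm_nonneg _) (mem_ball_zero_iff.mp w.2))
    exact ⟨⟨z, hz⟩, hr, hPz⟩
  choose next hnext using hnext
  let a : ℕ → ball (0:ℂ) 1 := fun j => Nat.rec (next 0 ⟨0, by simp⟩) (fun k w => next (k + 1) w) j
  have hPa : ∀ j, P j (a j).1 := by
    rintro (_ | j)
    exacts [(hnext 0 _).2, (hnext (j + 1) (a j)).2]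
  exact ⟨fun j => (a j).1, fun j => (a j).2, hPa, fun j => (hnext (j + 1) (a j)).1⟩

lemma exists_pd_separated_seq {P : ℕ → ℂ → Prop}
    (hP : ∀ j, ∀ r < 1, ∃ z ∈ ball (0:ℂ) 1, r < ‖z‖ ∧ P j z) :
    ∃ a : ℕ → ℂ, (∀ j, a j ∈ ball (0:ℂ) 1) ∧ (∀ i j, i ≠ j → 1 / 2 ≤ pd (a i) (a j)) ∧
      ∀ j, P j (a j) := by
  obtain ⟨a, ha, hPa, hgrow⟩ := exists_seq_pdHalfRadius_lt_norm hP
  have ha1 j : ‖a j‖ < 1 := mem_ball_zero_iff.mp (ha j)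
  have hmono : Monotone fun j => ‖a j‖ := monotone_nat_of_le_succ fun j =>
    (le_pdHalfRadius (norm_nonneg _) (ha1 j).le).trans (hgrow j).le
  have hsep {i j : ℕ} (hij : i < j) : 1 / 2 ≤ pd (a i) (a j) :=
    half_le_pd_of_pdHalfRadius_le (ha1 i) (ha1 j) ((hgrow i).le.trans (hmono hij))
  refine ⟨a, ha, fun i j hij => ?_, hPa⟩
  rcases hij.lt_or_gt with hij | hij
  exacts [hsep hij, pd_comm (a i) (a j) ▸ hsep hij]

/-- Borel–Carathéodory applied to `-F`, whose real part is negative. -/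
lemma IsPosHarmonicDisc.exists_one_sub_norm_mul_le {H : ℂ → ℝ} (hH : IsPosHarmonicDisc H) :
    ∃ C > 0, ∀ z ∈ ball (0:ℂ) 1, (1 - ‖z‖) * H z ≤ C := by
  obtain ⟨⟨F, hF, hHF⟩, hpos⟩ := hH
  refine ⟨2 + 2 * ‖F 0‖, by positivity, fun z hz => ?_⟩
  have hz1 : ‖z‖ < 1 := mem_ball_zero_iff.mp hz
  have hBC := Complex.borelCaratheodory (f := -F) (M := 1) one_pos hF.neg
    (fun w hw => by
      simp only [Set.mem_ofPred_eq, Pi.neg_apply, neg_re]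
      linarith [hpos w hw, hHF w hw])
    one_pos hz
  simp only [Pi.neg_apply, norm_neg] at hBC
  calc (1 - ‖z‖) * H z ≤ (1 - ‖z‖) * ‖F z‖ := by
        gcongr
        rw [hHF z hz]
        exact Complex.re_le_norm _
    _ ≤ 2 * 1 * ‖z‖ + ‖F 0‖ * (1 + ‖z‖) := by
        rwa [← le_div_iff₀' (by linarith), add_div]
    _ ≤ 2 + 2 * ‖F 0‖ := by nlinarith [norm_nonneg (F 0)]

/-- The intermediate scale `N = ⌈j / x₁⌉ + 1`. -/
lemma exists_nat_le_mul_and_mul_le_half_pow {x₁ x₂ C : ℝ} (j : ℕ) (hx₁ : 0 < x₁) (hx₂ : 0 < x₂)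
    (hC : x₁ ≤ C) (hratio : (j + 2 * C) * 2 ^ j ≤ x₁ / x₂) :
    ∃ N : ℕ, 0 < N ∧ (j : ℝ) ≤ N * x₁ ∧ N * x₂ ≤ (1 / 2) ^ j := by
  refine ⟨⌈(j : ℝ) / x₁⌉₊ + 1, Nat.succ_pos _, ?_, ?_⟩
  · push_cast
    rw [← div_le_iff₀ hx₁]
    linarith [Nat.le_ceil ((j : ℝ) / x₁)]
  · have hceil : (⌈(j : ℝ) / x₁⌉₊ : ℝ) < j / x₁ + 1 :=
      Nat.ceil_lt_add_one (div_nonneg j.cast_nonneg hx₁.le)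
    have hjC : 0 < (j : ℝ) + 2 * C := by linarith [j.cast_nonneg (α := ℝ)]
    push_cast
    calc ((⌈(j : ℝ) / x₁⌉₊ : ℝ) + 1) * x₂ ≤ (j / x₁ + 2) * x₂ := by gcongr ?_ * _; linarith
      _ = (j + 2 * x₁) / (x₁ / x₂) := by field_simp
      _ ≤ (j + 2 * C) / ((j + 2 * C) * 2 ^ j) := by gcongr
      _ = (1 / 2) ^ j := by
        rw [div_mul_cancel_left₀ hjC.ne', one_div_pow, one_div]

/-- The point-selection step in the proof of Theorem 1.4(a) of the paper. -/
theorem stmt_19 (H₁ H₂ : ℂ → ℝ)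
    (hH₁ : IsPosHarmonicDisc H₁) (hH₂ : IsPosHarmonicDisc H₂)
    (hlimsup : ∀ T : ℝ, ∀ r : ℝ, r < 1 →
      ∃ z ∈ Metric.ball (0:ℂ) 1, r < ‖z‖ ∧ T < H₁ z / H₂ z) :
    ∃ (a : ℕ → ℂ) (N : ℕ → ℕ),
      (∀ j, a j ∈ Metric.ball (0:ℂ) 1) ∧
      (∀ i j, i ≠ j → (1:ℝ)/2 ≤ pd (a i) (a j)) ∧
      Tendsto (fun j => H₁ (a j) / H₂ (a j)) atTop atTop ∧
      Tendsto (fun j => (1 - ‖a j‖) * H₂ (a j)) atTop (nhds 0) ∧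
      (∀ j, 0 < N j) ∧
      Tendsto (fun j => (N j : ℝ) * (1 - ‖a j‖) * H₂ (a j)) atTop (nhds 0) ∧
      Tendsto (fun j => (N j : ℝ) * (1 - ‖a j‖) * H₁ (a j)) atTop atTop ∧
      Summable (fun j => (N j : ℝ) * (1 - ‖a j‖) * H₂ (a j)) := by
  obtain ⟨C, hC₀, hC⟩ := hH₁.exists_one_sub_norm_mul_le
  obtain ⟨a, ha, hsep, hratio⟩ := exists_pd_separated_seq (P := fun j z =>
    ((j : ℝ) + 2 * C) * 2 ^ j < H₁ z / H₂ z) fun j r hr => hlimsup _ r hr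
  have hgap j : 0 < 1 - ‖a j‖ := sub_pos.2 (mem_ball_zero_iff.mp (ha j))
  have hN (j : ℕ) : ∃ N : ℕ, 0 < N ∧ (j : ℝ) ≤ N * ((1 - ‖a j‖) * H₁ (a j)) ∧
      N * ((1 - ‖a j‖) * H₂ (a j)) ≤ (1 / 2) ^ j :=
    exists_nat_le_mul_and_mul_le_half_pow j (mul_pos (hgap j) (hH₁.2 _ (ha j)))
      (mul_pos (hgap j) (hH₂.2 _ (ha j))) (hC _ (ha j))
      (by rw [mul_div_mul_left _ _ (hgap j).ne']; exact (hratio j).le)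
  choose N hNpos hN₁ hN₂ using hN
  simp only [← mul_assoc] at hN₁ hN₂
  have hx₂ j : 0 ≤ (1 - ‖a j‖) * H₂ (a j) := (mul_pos (hgap j) (hH₂.2 _ (ha j))).le
  have hNx₂ j : 0 ≤ (N j : ℝ) * (1 - ‖a j‖) * H₂ (a j) := by
    rw [mul_assoc]; exact mul_nonneg (N j).cast_nonneg (hx₂ j)
  have hhalf := tendsto_pow_atTop_nhds_zero_of_lt_one (r := (1 / 2 : ℝ)) (by norm_num) (by norm_num)
  refine ⟨a, N, ha, hsep, ?_, ?_, hNpos, squeeze_zero hNx₂ hN₂ hhalf,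
    tendsto_atTop_mono hN₁ tendsto_natCast_atTop_atTop,
    Summable.of_nonneg_of_le hNx₂ hN₂ summable_geometric_two⟩
  · refine tendsto_atTop_mono (fun j => ?_) tendsto_natCast_atTop_atTop
    have h2j : (1 : ℝ) ≤ 2 ^ j := one_le_pow₀ one_le_two
    nlinarith [hratio j, j.cast_nonneg (α := ℝ)]
  · refine squeeze_zero hx₂ (fun j => ?_) hhalf
    calc (1 - ‖a j‖) * H₂ (a j) ≤ N j * ((1 - ‖a j‖) * H₂ (a j)) :=
          le_mul_of_one_le_left (hx₂ j) (Nat.one_le_cast.2 (hNpos j))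
      _ ≤ (1 / 2) ^ j := (mul_assoc _ _ _).symm.trans_le (hN₂ j)
end
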